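/- Hoeffding's randomized permutation test is exact: if one rejects when T(X) > T^(k)(X) and rejects with probability a(X) = (α·#G − M⁺(X))/M⁰(X) when T(X) = T^(k)(X), where M⁺(X) = #{g ∈ G : T(gX) > T^(k)(X)} and M⁰(X) = #{g ∈ G : T(gX) = T^(k)(X)}, then the total rejection probability under H₀ is exactly α. -/

import Mathlib

/-!
Conditionally on `X = x`, the randomized test rejects with probability
`φ(x) = 1{T(x) > T⁽ᵏ⁾(x)} + a(x) 1{T(x) = T⁽ᵏ⁾(x)}`, so its size is `E φ(X)`.
Since `T⁽ᵏ⁾`, `M⁺` and `M⁰` only depend on the multiset of values `T(gx)`, they are constant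
along orbits, and `Σ_g φ(gx) = M⁺(x) + a(x) M⁰(x) = α #G` for every `x`; the invariance
hypothesis makes `E φ(gX)` independent of `g`, hence `#G · E φ(X) = α #G`.
The choice of `k` gives `M⁺ ≤ α #G < M⁺ + M⁰`, i.e. `0 ≤ a ≤ 1`, which is needed for `a(x)`
to be the probability `P(u < a(x))`.
-/

open MeasureTheory Finset
open scoped ENNReal

/-- The `k`-th smallest element (1-based) of a multiset of reals. -/
noncomputable def sortedVal (s : Multiset ℝ) (k : ℕ) : ℝ :=
  (s.sort (· ≤ ·)).getD (k - 1) 0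

namespace List

variable {α : Type*} [LinearOrder α] {l : List α} {i : ℕ}

theorem SortedLE.lt_countP_le_getElem (hl : l.SortedLE) (hi : i < l.length) :
    i < l.countP (· ≤ l[i]) := by
  have hle : ∀ a ∈ l.take (i + 1), a ≤ l[i] := by
    intro a ha
    obtain ⟨j, hj, rfl⟩ := mem_take_iff_getElem.1 ha
    exact hl.getElem_le_getElem_of_le (by omega)
  have htake : (l.take (i + 1)).countP (· ≤ l[i]) = i + 1 := by
    rw [countP_eq_length.2 (by simpa using hle), length_take]
    omega
  have := (take_sublist (i + 1) l).countP_le (p := (· ≤ l[i]))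
  omega

theorem SortedLE.countP_lt_getElem_le (hl : l.SortedLE) (hi : i < l.length) :
    l.countP (· < l[i]) ≤ i := by
  have hge : ∀ a ∈ l.drop i, l[i] ≤ a := by
    intro a ha
    obtain ⟨j, hj, rfl⟩ := mem_iff_getElem.1 ha
    rw [getElem_drop]
    exact hl.getElem_le_getElem_of_le (by omega)
  have hdrop : (l.drop i).countP (· < l[i]) = 0 := countP_eq_zero.2 (by simpa using hge)
  have htake := (countP_le_length (p := (· < l[i])) (l := l.take i)).trans (length_take_le i l)
  have hsplit := countP_append (p := (· < l[i])) (l₁ := l.take i) (l₂ := l.drop i)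
  rw [take_append_drop] at hsplit
  omega

end List

theorem Multiset.countP_sort {β : Type*} (r : β → β → Prop) [DecidableRel r] [IsTrans β r]
    [Std.Antisymm r] [Std.Total r] (s : Multiset β) (p : β → Prop) [DecidablePred p] :
    (s.sort r).countP p = s.countP p := by
  rw [← Multiset.coe_countP, Multiset.sort_eq]

section sortedVal

variable {s : Multiset ℝ} {k : ℕ}

theorem pred_lt_length_sort (hk : 0 < k) (hks : k ≤ Multiset.card s) :
    k - 1 < (s.sort (· ≤ ·)).length := by
  rw [Multiset.length_sort]
  omega

theorem sortedVal_eq_getElem (hk : 0 < k) (hks : k ≤ Multiset.card s) :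
    sortedVal s k = (s.sort (· ≤ ·))[k - 1]'(pred_lt_length_sort hk hks) :=
  List.getD_eq_getElem _ _ _

theorem sortedVal_mem (hk : 0 < k) (hks : k ≤ Multiset.card s) : sortedVal s k ∈ s := by
  rw [sortedVal_eq_getElem hk hks, ← Multiset.mem_sort (· ≤ ·)]
  exact List.getElem_mem _

theorem le_countP_le_sortedVal (hk : 0 < k) (hks : k ≤ Multiset.card s) :
    k ≤ s.countP (· ≤ sortedVal s k) := by
  have := (Multiset.pairwise_sort s (· ≤ ·)).sortedLE.lt_countP_le_getElem
    (pred_lt_length_sort hk hks)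
  rw [sortedVal_eq_getElem hk hks, ← Multiset.countP_sort (· ≤ ·)]
  omega

theorem countP_lt_sortedVal_lt (hk : 0 < k) (hks : k ≤ Multiset.card s) :
    s.countP (· < sortedVal s k) < k := by
  have := (Multiset.pairwise_sort s (· ≤ ·)).sortedLE.countP_lt_getElem_le
    (pred_lt_length_sort hk hks)
  rw [sortedVal_eq_getElem hk hks, ← Multiset.countP_sort (· ≤ ·)]
  omega

theorem sortedVal_le_iff (hk : 0 < k) (hks : k ≤ Multiset.card s) {c : ℝ} :
    sortedVal s k ≤ c ↔ k ≤ s.countP (· ≤ c) := by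
  have hle := le_countP_le_sortedVal hk hks
  have hlt := countP_lt_sortedVal_lt hk hks
  rw [← Multiset.countP_sort (· ≤ ·)] at hle hlt ⊢
  constructor
  · intro h
    refine hle.trans (List.countP_mono_left fun a _ ha => ?_)
    simp only [decide_eq_true_eq] at ha ⊢
    exact ha.trans h
  · intro h
    by_contra! hc
    have := List.countP_mono_left (l := s.sort (· ≤ ·)) (p := (· ≤ c)) (q := (· < sortedVal s k))
      fun a _ ha => by simp only [decide_eq_true_eq] at ha ⊢; exact ha.trans_lt hc
    omega

end sortedVal

section FiniteFamily

variable {ι : Type*} [Fintype ι]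

theorem countP_map_univ (y : ι → ℝ) (p : ℝ → Prop) [DecidablePred p] :
    (Multiset.map y univ.val).countP p = #{i | p (y i)} :=
  Multiset.countP_map _ _ _

theorem map_comp_perm_univ (y : ι → ℝ) (σ : Equiv.Perm ι) :
    Multiset.map (y ∘ σ) univ.val = Multiset.map y univ.val := by
  rw [← Multiset.map_map, Multiset.map_univ_val_equiv]

theorem card_filter_comp_perm (y : ι → ℝ) (σ : Equiv.Perm ι) (p : ℝ → Prop) [DecidablePred p] :
    #{i | p (y (σ i))} = #{i | p (y i)} := by
  rw [← countP_map_univ, ← countP_map_univ, ← map_comp_perm_univ y σ]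
  rfl

theorem card_le_add_card_gt (y : ι → ℝ) (c : ℝ) :
    #{i | y i ≤ c} + #{i | c < y i} = Fintype.card ι := by
  simpa only [not_le, card_univ] using card_filter_add_card_filter_not (s := univ) (y · ≤ c)

theorem card_lt_add_card_eq_add_card_gt (y : ι → ℝ) (c : ℝ) :
    #{i | y i < c} + #{i | y i = c} + #{i | c < y i} = Fintype.card ι := by
  simp only [card_filter, ← sum_add_distrib, Fintype.card_eq_sum_ones]
  refine sum_congr rfl fun i _ => ?_
  rcases lt_trichotomy (y i) c with h | h | h
  · simp [h, h.ne, h.not_gt]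
  · simp [h]
  · simp [h, h.ne', h.not_gt]

theorem measurable_natCast_card_filter {β : Type*} [MeasurableSpace β] {p : ι → β → Prop}
    [∀ i, DecidablePred (p i)] (hp : ∀ i, MeasurableSet {b | p i b}) :
    Measurable fun b => (#{i | p i b} : ℝ) := by
  simp only [natCast_card_filter]
  exact Finset.measurable_sum _ fun i _ => Measurable.ite (hp i) measurable_const measurable_const

end FiniteFamily

theorem volume_restrict_Icc_setOf_or_and_lt (p q : Prop) [Decidable p] [Decidable q] {a : ℝ}
    (ha : a ≤ 1) :
    volume.restrict (Set.Icc (0 : ℝ) 1) {t | p ∨ (q ∧ t < a)} =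
      ENNReal.ofReal (if p then 1 else if q then a else 0) := by
  by_cases hp : p
  · simp [hp]
  by_cases hq : q
  · have hIco : {t : ℝ | p ∨ (q ∧ t < a)} ∩ Set.Icc 0 1 = Set.Ico 0 a := by
      ext t
      simp only [hp, hq, false_or, true_and, Set.mem_inter_iff, Set.mem_ofPred_eq, Set.mem_Icc,
        Set.mem_Ico]
      constructor
      · rintro ⟨hta, ht₀, -⟩
        exact ⟨ht₀, hta⟩
      · rintro ⟨ht₀, hta⟩
        exact ⟨hta, ht₀, hta.le.trans ha⟩
    rw [Measure.restrict_apply' measurableSet_Icc, hIco]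
    simp [hp, hq]
  · simp [hp, hq]

theorem measure_randomized_rejection {Ω 𝒵 : Type*} [MeasurableSpace Ω] [MeasurableSpace 𝒵]
    {P : Measure Ω} {Z : Ω → 𝒵} {u : Ω → ℝ} (hZ : Measurable Z) (hu : Measurable u)
    (hlaw : P.map (fun ω => (Z ω, u ω)) = (P.map Z).prod (volume.restrict (Set.Icc 0 1)))
    {p q : 𝒵 → Prop} [DecidablePred p] [DecidablePred q] (hp : MeasurableSet {z | p z})
    (hq : MeasurableSet {z | q z}) {a : 𝒵 → ℝ} (ha : Measurable a) (ha₁ : ∀ z, a z ≤ 1) :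
    P {ω | p (Z ω) ∨ (q (Z ω) ∧ u ω < a (Z ω))} =
      ∫⁻ z, ENNReal.ofReal (if p z then 1 else if q z then a z else 0) ∂P.map Z := by
  have hS : MeasurableSet {x : 𝒵 × ℝ | p x.1 ∨ (q x.1 ∧ x.2 < a x.1)} :=
    (measurable_fst hp).union
      ((measurable_fst hq).inter (measurableSet_lt measurable_snd (ha.comp measurable_fst)))
  have hpre : {ω | p (Z ω) ∨ (q (Z ω) ∧ u ω < a (Z ω))} =
      (fun ω => (Z ω, u ω)) ⁻¹' {x | p x.1 ∨ (q x.1 ∧ x.2 < a x.1)} := rfl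
  rw [hpre, ← Measure.map_apply (hZ.prodMk hu) hS, hlaw, Measure.prod_apply hS]
  exact lintegral_congr fun z => volume_restrict_Icc_setOf_or_and_lt (p z) (q z) (ha₁ z)

theorem card_mul_lintegral_eq_lintegral_sum_mul_right {G β : Type*} [Group G] [Fintype G]
    [MeasurableSpace β] {ν : Measure (G → β)} (hν : ∀ g : G, ν.map (fun y a => y (a * g)) = ν)
    {f : (G → β) → ℝ≥0∞} (hf : Measurable f) :
    Fintype.card G * ∫⁻ y, f y ∂ν = ∫⁻ y, ∑ g, f (fun a => y (a * g)) ∂ν := by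
  have hshift (g : G) : Measurable fun (y : G → β) a => y (a * g) :=
    measurable_pi_lambda _ fun a => measurable_pi_apply _
  calc (Fintype.card G : ℝ≥0∞) * ∫⁻ y, f y ∂ν = ∑ g : G, ∫⁻ y, f (fun a => y (a * g)) ∂ν := by
        rw [← card_univ, ← nsmul_eq_mul, ← sum_const]
        refine sum_congr rfl fun g _ => ?_
        rw [← lintegral_map hf (hshift g), hν g]
    _ = ∫⁻ y, ∑ g, f (fun a => y (a * g)) ∂ν :=
        (lintegral_finsetSum _ fun g _ => hf.comp (hshift g)).symm

namespace PermutationTest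

noncomputable def critIndex (ι : Type*) [Fintype ι] (α : ℝ) : ℕ := ⌈(1 - α) * Fintype.card ι⌉₊

variable {ι : Type*} [Fintype ι]

-- With `y g = T (g • x)`, these are `T⁽ᵏ⁾(x)`, `M⁺(x)`, `M⁰(x)` and `a(x)`, and
-- `rejectProb α y g` is the rejection probability of the test at the point `g • x`.
noncomputable def critVal (α : ℝ) (y : ι → ℝ) : ℝ :=
  sortedVal (Multiset.map y univ.val) (critIndex ι α)

noncomputable def numAbove (α : ℝ) (y : ι → ℝ) : ℕ := #{i | critVal α y < y i}

noncomputable def numTies (α : ℝ) (y : ι → ℝ) : ℕ := #{i | y i = critVal α y}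

noncomputable def tieProb (α : ℝ) (y : ι → ℝ) : ℝ :=
  (α * Fintype.card ι - numAbove α y) / numTies α y

noncomputable def rejectProb (α : ℝ) (y : ι → ℝ) (i : ι) : ℝ :=
  if critVal α y < y i then 1 else if y i = critVal α y then tieProb α y else 0

variable {α : ℝ}

theorem critIndex_pos [Nonempty ι] (hα : α < 1) : 0 < critIndex ι α := by
  have : (0 : ℝ) < Fintype.card ι := by exact_mod_cast Fintype.card_pos
  rw [critIndex, Nat.ceil_pos]
  nlinarith

theorem critIndex_le_card (hα : 0 ≤ α) : critIndex ι α ≤ Fintype.card ι := by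
  rw [critIndex, Nat.ceil_le]
  nlinarith [(Fintype.card ι).cast_nonneg (α := ℝ)]

theorem critIndex_le_card_map (hα : 0 ≤ α) (y : ι → ℝ) :
    critIndex ι α ≤ Multiset.card (Multiset.map y univ.val) := by
  simpa using critIndex_le_card hα

theorem critIndex_lt_add_one (hα : α ≤ 1) :
    (critIndex ι α : ℝ) < (1 - α) * Fintype.card ι + 1 :=
  Nat.ceil_lt_add_one (by nlinarith [(Fintype.card ι).cast_nonneg (α := ℝ)])

theorem critVal_le_iff [Nonempty ι] (hα : α ∈ Set.Ico 0 1) (y : ι → ℝ) {c : ℝ} :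
    critVal α y ≤ c ↔ critIndex ι α ≤ #{i | y i ≤ c} := by
  rw [critVal, sortedVal_le_iff (critIndex_pos hα.2) (critIndex_le_card_map hα.1 y),
    countP_map_univ]

theorem card_lt_critVal_lt [Nonempty ι] (hα : α ∈ Set.Ico 0 1) (y : ι → ℝ) :
    #{i | y i < critVal α y} < critIndex ι α := by
  rw [← countP_map_univ y (· < critVal α y)]
  exact countP_lt_sortedVal_lt (critIndex_pos hα.2) (critIndex_le_card_map hα.1 y)

theorem numTies_pos [Nonempty ι] (hα : α ∈ Set.Ico 0 1) (y : ι → ℝ) : 0 < numTies α y := by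
  obtain ⟨i, -, hi⟩ := Multiset.mem_map.1 <|
    sortedVal_mem (critIndex_pos hα.2) (critIndex_le_card_map hα.1 y)
  exact card_pos.2 ⟨i, mem_filter.2 ⟨mem_univ i, hi⟩⟩

theorem numAbove_le [Nonempty ι] (hα : α ∈ Set.Ico 0 1) (y : ι → ℝ) :
    (numAbove α y : ℝ) ≤ α * Fintype.card ι := by
  have hk : (critIndex ι α : ℝ) ≤ #{i | y i ≤ critVal α y} := by
    exact_mod_cast (critVal_le_iff hα y).1 le_rfl
  have hsum : (#{i | y i ≤ critVal α y} : ℝ) + numAbove α y = Fintype.card ι := by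
    exact_mod_cast card_le_add_card_gt y (critVal α y)
  have hceil : (1 - α) * Fintype.card ι ≤ critIndex ι α := Nat.le_ceil _
  linarith

theorem lt_numAbove_add_numTies [Nonempty ι] (hα : α ∈ Set.Ico 0 1) (y : ι → ℝ) :
    α * Fintype.card ι < numAbove α y + numTies α y := by
  have hk : (#{i | y i < critVal α y} : ℝ) + 1 ≤ critIndex ι α := by
    exact_mod_cast card_lt_critVal_lt hα y
  have hsum : (#{i | y i < critVal α y} : ℝ) + numTies α y + numAbove α y = Fintype.card ι := by
    exact_mod_cast card_lt_add_card_eq_add_card_gt y (critVal α y)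
  linarith [critIndex_lt_add_one (ι := ι) hα.2.le]

theorem tieProb_nonneg [Nonempty ι] (hα : α ∈ Set.Ico 0 1) (y : ι → ℝ) : 0 ≤ tieProb α y :=
  div_nonneg (by linarith [numAbove_le hα y]) (Nat.cast_nonneg _)

theorem tieProb_le_one [Nonempty ι] (hα : α ∈ Set.Ico 0 1) (y : ι → ℝ) : tieProb α y ≤ 1 := by
  rw [tieProb, div_le_one (by exact_mod_cast numTies_pos hα y)]
  linarith [lt_numAbove_add_numTies hα y]

theorem rejectProb_nonneg [Nonempty ι] (hα : α ∈ Set.Ico 0 1) (y : ι → ℝ) (i : ι) :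
    0 ≤ rejectProb α y i := by
  unfold rejectProb
  split_ifs
  exacts [zero_le_one, tieProb_nonneg hα y, le_rfl]

theorem sum_rejectProb [Nonempty ι] (hα : α ∈ Set.Ico 0 1) (y : ι → ℝ) :
    ∑ i, rejectProb α y i = α * Fintype.card ι := by
  have hsplit (i : ι) : rejectProb α y i = (if critVal α y < y i then 1 else 0) +
      if y i = critVal α y then tieProb α y else 0 := by
    by_cases h : critVal α y < y i
    · simp [rejectProb, h, h.ne']
    · simp [rejectProb, h]
  have hTies : (numTies α y : ℝ) ≠ 0 := by exact_mod_cast (numTies_pos hα y).ne'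
  simp only [hsplit, sum_add_distrib, ← sum_filter, sum_const, nsmul_eq_mul, mul_one]
  rw [← numAbove, ← numTies, tieProb, mul_div_cancel₀ _ hTies]
  ring

theorem critVal_comp_perm (y : ι → ℝ) (σ : Equiv.Perm ι) : critVal α (y ∘ σ) = critVal α y := by
  rw [critVal, map_comp_perm_univ, critVal]

theorem tieProb_comp_perm (y : ι → ℝ) (σ : Equiv.Perm ι) : tieProb α (y ∘ σ) = tieProb α y := by
  simp only [tieProb, numAbove, numTies, critVal_comp_perm, Function.comp_apply,
    card_filter_comp_perm y σ (critVal α y < ·), card_filter_comp_perm y σ (· = critVal α y)]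

theorem rejectProb_comp_perm (y : ι → ℝ) (σ : Equiv.Perm ι) (i : ι) :
    rejectProb α (y ∘ σ) i = rejectProb α y (σ i) := by
  simp only [rejectProb, critVal_comp_perm, tieProb_comp_perm, Function.comp_apply]

theorem measurable_critVal [Nonempty ι] (hα : α ∈ Set.Ico 0 1) :
    Measurable (critVal α : (ι → ℝ) → ℝ) := by
  refine measurable_of_Iic fun c => ?_
  have hpre : critVal α ⁻¹' Set.Iic c = {y : ι → ℝ | (critIndex ι α : ℝ) ≤ #{i | y i ≤ c}} := by
    ext y
    simp [critVal_le_iff hα]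
  rw [hpre]
  exact measurableSet_le measurable_const <| measurable_natCast_card_filter fun i =>
    measurableSet_le (measurable_pi_apply i) measurable_const

theorem measurable_tieProb [Nonempty ι] (hα : α ∈ Set.Ico 0 1) :
    Measurable (tieProb α : (ι → ℝ) → ℝ) := by
  have hAbove : Measurable fun y : ι → ℝ => (numAbove α y : ℝ) :=
    measurable_natCast_card_filter fun i =>
      measurableSet_lt (measurable_critVal hα) (measurable_pi_apply i)
  have hTies : Measurable fun y : ι → ℝ => (numTies α y : ℝ) :=
    measurable_natCast_card_filter fun i =>
      measurableSet_eq_fun (measurable_pi_apply i) (measurable_critVal hα)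
  exact (measurable_const.sub hAbove).div hTies

theorem measurable_rejectProb [Nonempty ι] (hα : α ∈ Set.Ico 0 1) (i : ι) :
    Measurable fun y : ι → ℝ => rejectProb α y i :=
  Measurable.ite (measurableSet_lt (measurable_critVal hα) (measurable_pi_apply i))
    measurable_const <| Measurable.ite
      (measurableSet_eq_fun (measurable_pi_apply i) (measurable_critVal hα))
      (measurable_tieProb hα) measurable_const

theorem lintegral_rejectProb_one {G : Type*} [Group G] [Fintype G]
    {ν : Measure (G → ℝ)} [IsProbabilityMeasure ν]
    (hν : ∀ g : G, ν.map (fun y a => y (a * g)) = ν) (hα : α ∈ Set.Ico 0 1) :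
    ∫⁻ y, ENNReal.ofReal (rejectProb α y 1) ∂ν = ENNReal.ofReal α := by
  have hsum (y : G → ℝ) : ∑ g, ENNReal.ofReal (rejectProb α (fun a => y (a * g)) 1) =
      ENNReal.ofReal α * Fintype.card G := by
    have hshift (g : G) : rejectProb α (fun a => y (a * g)) 1 = rejectProb α y g := by
      simpa [Function.comp_def] using rejectProb_comp_perm y (Equiv.mulRight g) 1
    simp only [hshift]
    rw [← ENNReal.ofReal_sum_of_nonneg fun g _ => rejectProb_nonneg hα y g, sum_rejectProb hα y,
      ENNReal.ofReal_mul hα.1, ENNReal.ofReal_natCast]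
  have h := card_mul_lintegral_eq_lintegral_sum_mul_right hν
    (f := fun y => ENNReal.ofReal (rejectProb α y 1)) (measurable_rejectProb hα 1).ennreal_ofReal
  rw [lintegral_congr fun y => hsum y, lintegral_const, measure_univ, mul_one,
    mul_comm _ (Fintype.card G : ℝ≥0∞)] at h
  exact (ENNReal.mul_right_inj (by simp) (by simp)).1 h

end PermutationTest

open PermutationTest in
/-- Hoeffding's randomized permutation test is exact: rejecting when
`T(X) > T⁽ᵏ⁾(X)` and with probability `a(X) = (α·#G − M⁺(X))/M⁰(X)` when
`T(X) = T⁽ᵏ⁾(X)` gives rejection probability exactly `α` under the null. -/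
theorem hoeffding_randomized_test_exact
    {Ω 𝒳 G : Type*} [MeasurableSpace Ω] [MeasurableSpace 𝒳]
    [Group G] [Fintype G] [MulAction G 𝒳]
    (P : Measure Ω) [IsProbabilityMeasure P]
    (X : Ω → 𝒳) (hX : Measurable X)
    (hG : ∀ g : G, Measurable fun x : 𝒳 => g • x)
    (T : 𝒳 → ℝ) (hT : Measurable T)
    (hinv : ∀ g : G,
      Measure.map (fun ω => fun a : G => T (a • X ω)) P =
        Measure.map (fun ω => fun a : G => T (a • g • X ω)) P)
    (α : ℝ) (hα : α ∈ Set.Ico (0 : ℝ) 1)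
    -- the auxiliary uniform randomization `u`, independent of `X`
    (u : Ω → ℝ) (hu : Measurable u)
    (hlaw : Measure.map (fun ω => (X ω, u ω)) P =
      (Measure.map X P).prod (volume.restrict (Set.Icc (0 : ℝ) 1))) :
    -- notation
    (fun Tk : 𝒳 → ℝ =>
      (fun Mplus : 𝒳 → ℕ => (fun Mzero : 𝒳 → ℕ =>
        (fun a : 𝒳 → ℝ =>
          (P {ω | T (X ω) > Tk (X ω) ∨
              (T (X ω) = Tk (X ω) ∧ u ω < a (X ω))}).toReal = α)
        (fun x => (α * (Fintype.card G : ℝ) - (Mplus x : ℝ)) / (Mzero x : ℝ)))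
        (fun x => (Finset.univ.filter fun g : G => T (g • x) = Tk x).card))
      (fun x => (Finset.univ.filter fun g : G => T (g • x) > Tk x).card))
    (fun x => sortedVal (Multiset.map (fun g : G => T (g • x)) Finset.univ.val)
      (Nat.ceil ((1 - α) * (Fintype.card G : ℝ)))) := by
  set orbit : 𝒳 → G → ℝ := fun x a => T (a • x) with horbit_def
  have horbit : Measurable orbit := measurable_pi_lambda _ fun a => hT.comp (hG a)
  have hν (g : G) : (P.map (orbit ∘ X)).map (fun y a => y (a * g)) = P.map (orbit ∘ X) := by
    rw [Measure.map_map (measurable_pi_lambda _ fun a => measurable_pi_apply _) (horbit.comp hX)]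
    simpa [horbit_def, Function.comp_def, mul_smul] using (hinv g).symm
  have : IsProbabilityMeasure (P.map (orbit ∘ X)) :=
    Measure.isProbabilityMeasure_map (horbit.comp hX).aemeasurable
  show (P {ω | critVal α (orbit (X ω)) < T (X ω) ∨ (T (X ω) = critVal α (orbit (X ω)) ∧
    u ω < tieProb α (orbit (X ω)))}).toReal = α
  rw [measure_randomized_rejection hX hu hlaw (p := fun x => critVal α (orbit x) < T x)
      (q := fun x => T x = critVal α (orbit x)) (a := fun x => tieProb α (orbit x))
      (measurableSet_lt ((measurable_critVal hα).comp horbit) hT)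
      (measurableSet_eq_fun hT ((measurable_critVal hα).comp horbit))
      ((measurable_tieProb hα).comp horbit) (fun x => tieProb_le_one hα _)]
  calc (∫⁻ x, ENNReal.ofReal (if critVal α (orbit x) < T x then 1
          else if T x = critVal α (orbit x) then tieProb α (orbit x) else 0) ∂P.map X).toReal
      = (∫⁻ x, ENNReal.ofReal (rejectProb α (orbit x) 1) ∂P.map X).toReal := by
        simp only [rejectProb, orbit, one_smul]
    _ = α := by
        rw [← lintegral_map (f := fun y => ENNReal.ofReal (rejectProb α y 1))
          (measurable_rejectProb hα 1).ennreal_ofReal horbit,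
          Measure.map_map horbit hX, lintegral_rejectProb_one hν hα, ENNReal.toReal_ofReal hα.1]
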